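/- If Λ₁ and Λ₂ are covolume-1 lattices in ℝ² with syst(Λ₁) = syst(Λ₂) and Λ₂ hexagonal (i.e. of maximal systole and well-rounded), and the product lattice Λ₁ × Λ₂ ⊂ ℝ⁴ has at least 3 linearly independent minimal vectors, then Λ₁ is also hexagonal. -/

import Mathlib

open Complex

/-- The lattice in ℂ ≅ ℝ² generated by `a` and `b`. -/
noncomputable def latticeOf (a b : ℂ) : AddSubgroup ℂ := AddSubgroup.closure {a, b}

/-- The covolume of the lattice generated by `a` and `b`:
the area of the fundamental parallelogram. -/
noncomputable def covol (a b : ℂ) : ℝ := |((starRingEnd ℂ) a * b).im|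

/-- The systole of a lattice in ℂ: the infimum of the norms of its
nonzero elements. -/
noncomputable def systole (L : AddSubgroup ℂ) : ℝ :=
  sInf {r | ∃ v ∈ L, v ≠ 0 ∧ ‖v‖ = r}

/-- A minimal vector of a lattice: a nonzero vector realizing the systole. -/
def IsMinimalVector (L : AddSubgroup ℂ) (v : ℂ) : Prop :=
  v ∈ L ∧ v ≠ 0 ∧ ‖v‖ = systole L

/-- The scaling factor (2/√3)^{1/2} making the hexagonal lattice have
covolume one. -/
noncomputable def c₀ : ℝ := Real.sqrt (2 / Real.sqrt 3)

/-- The hexagonal lattice `ℤ + ℤ e^{iπ/3}` rescaled to covolume one. -/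
noncomputable def hexLattice : AddSubgroup ℂ :=
  latticeOf c₀ (c₀ * Complex.exp (Real.pi / 3 * Complex.I))

/-- A lattice in ℂ ≅ ℝ² is hexagonal if it is the image of the rescaled
hexagonal lattice under a (linear) isometry of ℝ². -/
def IsHexagonal (L : AddSubgroup ℂ) : Prop :=
  ∃ f : ℂ ≃ₗᵢ[ℝ] ℂ, (L : Set ℂ) = f '' (hexLattice : Set ℂ)

/-- The Euclidean norm on ℝ⁴ = ℝ² ⊕ ℝ² ≅ ℂ × ℂ (orthogonal direct sum). -/
noncomputable def norm4 (v : ℂ × ℂ) : ℝ := Real.sqrt (‖v.1‖ ^ 2 + ‖v.2‖ ^ 2)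

/-- The systole of a lattice in ℝ⁴ ≅ ℂ × ℂ. -/
noncomputable def systole4 (L : AddSubgroup (ℂ × ℂ)) : ℝ :=
  sInf {r | ∃ v ∈ L, v ≠ 0 ∧ norm4 v = r}

/-- A minimal vector of a lattice in ℝ⁴ ≅ ℂ × ℂ. -/
def IsMinimalVector4 (L : AddSubgroup (ℂ × ℂ)) (v : ℂ × ℂ) : Prop :=
  v ∈ L ∧ v ≠ 0 ∧ norm4 v = systole4 L

/-- A lattice in ℝ² ≅ ℂ is well-rounded if its minimal vectors span ℝ². -/
def WellRounded (L : AddSubgroup ℂ) : Prop :=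
  Submodule.span ℝ {v | IsMinimalVector L v} = ⊤

/-! A minimal vector of Λ₁ × Λ₂ has norm at most syst Λ₂ = syst Λ₁, so if its first component is
nonzero, that component is a minimal vector of Λ₁; three independent minimal vectors cannot all
lie in 0 × ℝ², so one of them has this property. A covolume-one lattice with a minimal vector `u`
of the hexagonal length `c₀` is hexagonal: `u` is primitive, so it extends to a basis `u, z u`;
covolume one gives `|Im z| = √3/2`, and `‖(z - k) u‖ ≥ c₀` for all `k ∈ ℤ` then forces
`z ≡ e^{±iπ/3}` modulo `ℤ`. -/

open ComplexConjugate

lemma mem_latticeOf {a b x : ℂ} : x ∈ latticeOf a b ↔ ∃ m n : ℤ, m * a + n * b = x := by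
  simp [latticeOf, AddSubgroup.mem_closure_pair, zsmul_eq_mul]

lemma latticeOf_lincomb_eq {a b : ℂ} {m n p q : ℤ} (hdet : m * q - n * p = 1) :
    latticeOf (m * a + n * b) (p * a + q * b) = latticeOf a b := by
  have hdetC : (m * q - n * p : ℂ) = 1 := by exact_mod_cast hdet
  refine le_antisymm ((AddSubgroup.closure_le _).2 ?_) ((AddSubgroup.closure_le _).2 ?_) <;>
    simp only [Set.insert_subset_iff, Set.singleton_subset_iff, SetLike.mem_coe, mem_latticeOf]
  · exact ⟨⟨m, n, rfl⟩, ⟨p, q, rfl⟩⟩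
  · exact ⟨⟨q, -n, by push_cast; linear_combination a * hdetC⟩,
      ⟨-p, m, by push_cast; linear_combination b * hdetC⟩⟩

lemma latticeOf_add_intCast_mul (u v : ℂ) (k : ℤ) :
    latticeOf u (v + k * u) = latticeOf u v := by
  simpa [add_comm] using latticeOf_lincomb_eq (a := u) (b := v) (m := 1) (n := 0) (p := k) (q := 1)
    (by ring)

lemma covol_lincomb (a b : ℂ) (m n p q : ℤ) :
    covol (m * a + n * b) (p * a + q * b) = |(m * q - n * p : ℝ)| * covol a b := by
  rw [covol, covol, ← abs_mul]
  congr 1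
  simp only [map_add, map_mul, map_intCast, add_im, mul_im, mul_re, add_re, intCast_re, intCast_im,
    conj_re, conj_im]
  ring

lemma covol_mul_self (u z : ℂ) : covol u (z * u) = ‖u‖ ^ 2 * |z.im| := by
  rw [covol, mul_left_comm, ← normSq_eq_conj_mul_self, mul_comm, im_ofReal_mul, normSq_eq_norm_sq,
    abs_mul, abs_of_nonneg (by positivity)]

lemma image_latticeOf (f : ℂ ≃ₗᵢ[ℝ] ℂ) (a b : ℂ) :
    f '' latticeOf a b = latticeOf (f a) (f b) := by
  rw [latticeOf, latticeOf, ← Set.image_pair]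
  exact congrArg SetLike.coe (AddMonoidHom.map_closure (f : ℂ →+ ℂ) {a, b})

lemma systole_le_norm {L : AddSubgroup ℂ} {v : ℂ} (hv : v ∈ L) (h0 : v ≠ 0) :
    systole L ≤ ‖v‖ :=
  csInf_le ⟨0, by rintro r ⟨w, -, -, rfl⟩; positivity⟩ ⟨v, hv, h0, rfl⟩

lemma systole4_le_norm4 {L : AddSubgroup (ℂ × ℂ)} {v : ℂ × ℂ} (hv : v ∈ L) (h0 : v ≠ 0) :
    systole4 L ≤ norm4 v :=
  csInf_le ⟨0, by rintro r ⟨w, -, -, rfl⟩; exact Real.sqrt_nonneg _⟩ ⟨v, hv, h0, rfl⟩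

lemma systole_eq_of_forall_le {L : AddSubgroup ℂ} {r : ℝ} (hw : ∃ w ∈ L, w ≠ 0 ∧ ‖w‖ = r)
    (hmin : ∀ v ∈ L, v ≠ 0 → r ≤ ‖v‖) : systole L = r := by
  obtain ⟨w, hw, hw0, rfl⟩ := hw
  refine le_antisymm (systole_le_norm hw hw0) (le_csInf ⟨_, w, hw, hw0, rfl⟩ ?_)
  rintro r ⟨v, hv, hv0, rfl⟩
  exact hmin v hv hv0

lemma norm_fst_le_norm4 {v : ℂ × ℂ} : ‖v.1‖ ≤ norm4 v :=
  Real.le_sqrt_of_sq_le (le_add_of_nonneg_right (sq_nonneg _))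

noncomputable def ω : ℂ := ⟨1 / 2, √3 / 2⟩

lemma hexLattice_eq : hexLattice = latticeOf c₀ (ω * c₀) := by
  have hω : exp (Real.pi / 3 * I) = ω := by
    apply Complex.ext <;> simp [exp_re, exp_im, ω, Real.cos_pi_div_three, Real.sin_pi_div_three]
  rw [hexLattice, hω, mul_comm]

lemma c₀_pos : 0 < c₀ := Real.sqrt_pos.2 (by positivity)

lemma c₀_sq : c₀ ^ 2 = 2 / √3 := Real.sq_sqrt (by positivity)

lemma norm_sq_intCast_add_intCast_mul_ω (m n : ℤ) :
    ‖(m + n * ω : ℂ)‖ ^ 2 = m ^ 2 + m * n + n ^ 2 := by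
  have h3 : √3 ^ 2 = 3 := Real.sq_sqrt (by norm_num)
  rw [Complex.sq_norm, normSq_apply]
  simp only [ω, add_re, add_im, mul_re, mul_im, intCast_re, intCast_im]
  linear_combination (n : ℝ) ^ 2 / 4 * h3

lemma one_le_sq_add_mul_add_sq {m n : ℤ} (h : m ≠ 0 ∨ n ≠ 0) : 1 ≤ m ^ 2 + m * n + n ^ 2 := by
  rcases eq_or_ne n 0 with rfl | hn
  · nlinarith [sq_pos_of_ne_zero (h.resolve_right (not_not.2 rfl))]
  · have : 0 < m ^ 2 + m * n + n ^ 2 := by nlinarith [sq_pos_of_ne_zero hn, sq_nonneg (2 * m + n)]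
    linarith

lemma c₀_le_norm_of_mem_hexLattice {x : ℂ} (hx : x ∈ hexLattice) (h0 : x ≠ 0) : c₀ ≤ ‖x‖ := by
  rw [hexLattice_eq, mem_latticeOf] at hx
  obtain ⟨m, n, rfl⟩ := hx
  have hmn : m ≠ 0 ∨ n ≠ 0 := by
    by_contra! h
    simp [h.1, h.2] at h0
  have h1 : 1 ≤ ‖(m + n * ω : ℂ)‖ := by
    rw [← one_le_sq_iff₀ (norm_nonneg _), norm_sq_intCast_add_intCast_mul_ω]
    exact_mod_cast one_le_sq_add_mul_add_sq hmn
  calc c₀ ≤ ‖(m + n * ω : ℂ)‖ * c₀ := le_mul_of_one_le_left c₀_pos.le h1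
    _ = ‖(m * c₀ + n * (ω * c₀) : ℂ)‖ := by
      rw [← mul_assoc, ← add_mul, norm_mul, norm_real, Real.norm_of_nonneg c₀_pos.le]

lemma IsHexagonal.exists_norm_eq {L : AddSubgroup ℂ} (h : IsHexagonal L) :
    ∃ w ∈ L, w ≠ 0 ∧ ‖w‖ = c₀ := by
  obtain ⟨f, hf⟩ := h
  refine ⟨f c₀, ?_, ?_, ?_⟩
  · rw [← SetLike.mem_coe, hf, hexLattice_eq]
    exact Set.mem_image_of_mem f (AddSubgroup.subset_closure (Set.mem_insert _ _))
  · simpa using c₀_pos.ne'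
  · rw [f.norm_map, norm_real, Real.norm_of_nonneg c₀_pos.le]

lemma IsHexagonal.c₀_le_norm {L : AddSubgroup ℂ} (h : IsHexagonal L) {v : ℂ} (hv : v ∈ L)
    (h0 : v ≠ 0) : c₀ ≤ ‖v‖ := by
  obtain ⟨f, hf⟩ := h
  rw [← SetLike.mem_coe, hf] at hv
  obtain ⟨x, hx, rfl⟩ := hv
  rw [f.norm_map]
  exact c₀_le_norm_of_mem_hexLattice hx (by simpa using h0)

lemma IsHexagonal.systole_eq {L : AddSubgroup ℂ} (h : IsHexagonal L) : systole L = c₀ :=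
  systole_eq_of_forall_le h.exists_norm_eq fun _ => h.c₀_le_norm

lemma IsHexagonal.exists_isMinimalVector {L : AddSubgroup ℂ} (h : IsHexagonal L) :
    ∃ w, IsMinimalVector L w := by
  obtain ⟨w, hw, hw0, hnorm⟩ := h.exists_norm_eq
  exact ⟨w, hw, hw0, hnorm.trans h.systole_eq.symm⟩

lemma isHexagonal_latticeOf_mul {u z : ℂ} (hu : ‖u‖ = c₀) (hz : z = ω ∨ z = conj ω) :
    IsHexagonal (latticeOf u (z * u)) := by
  obtain ⟨e, he₁, he₂⟩ : ∃ e : ℂ ≃ₗᵢ[ℝ] ℂ, e c₀ = c₀ ∧ e (ω * c₀) = z * c₀ := by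
    rcases hz with rfl | rfl
    · exact ⟨LinearIsometryEquiv.refl ℝ ℂ, rfl, rfl⟩
    · exact ⟨conjLIE, by simp, by simp⟩
  have hc₀ : (c₀ : ℂ) ≠ 0 := by exact_mod_cast c₀_pos.ne'
  have hunit : u / c₀ ∈ Submonoid.unitSphere ℂ := by
    rw [Submonoid.unitSphere, Submonoid.mem_mk, Subsemigroup.mem_mk, mem_sphere_zero_iff_norm,
      norm_div, hu, norm_real, Real.norm_of_nonneg c₀_pos.le, div_self c₀_pos.ne']
  let r : Circle := ⟨u / c₀, hunit⟩
  refine ⟨e.trans (rotation r), ?_⟩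
  rw [hexLattice_eq, image_latticeOf, LinearIsometryEquiv.trans_apply,
    LinearIsometryEquiv.trans_apply, he₁, he₂, rotation_apply, rotation_apply]
  change _ = ((latticeOf (u / c₀ * c₀) (u / c₀ * (z * c₀)) : AddSubgroup ℂ) : Set ℂ)
  congr 2 <;> field_simp

lemma exists_int_eq_add_half {x : ℝ} (h : ∀ k : ℤ, 1 / 4 ≤ (x - k) ^ 2) :
    ∃ k : ℤ, x = k + 1 / 2 := by
  refine ⟨⌊x + 1 / 2⌋ - 1, ?_⟩
  have h₁ := Int.floor_le (x + 1 / 2)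
  have h₂ := Int.lt_floor_add_one (x + 1 / 2)
  have h₃ := h ⌊x + 1 / 2⌋
  push_cast
  nlinarith

lemma exists_latticeOf_mul_eq_hex {u z : ℂ} (hu : ‖u‖ = c₀) (hcov : covol u (z * u) = 1)
    (hmin : ∀ x ∈ latticeOf u (z * u), x ≠ 0 → c₀ ≤ ‖x‖) :
    ∃ w, (w = ω ∨ w = conj ω) ∧ latticeOf u (z * u) = latticeOf u (w * u) := by
  have hu0 : u ≠ 0 := norm_pos_iff.1 (hu ▸ c₀_pos)
  have h3 : √3 ^ 2 = 3 := Real.sq_sqrt (by norm_num)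
  have him : |z.im| = √3 / 2 := by
    rw [covol_mul_self, hu, c₀_sq] at hcov
    field_simp at hcov
    nlinarith
  have him_sq : z.im ^ 2 = 3 / 4 := by
    rw [← sq_abs, him]
    linear_combination h3 / 4
  have hre : ∀ k : ℤ, 1 / 4 ≤ (z.re - k) ^ 2 := by
    intro k
    have hmem : (z - k) * u ∈ latticeOf u (z * u) := mem_latticeOf.2 ⟨-k, 1, by push_cast; ring⟩
    have hzk : z - k ≠ 0 := fun h => by
      have := congrArg im h
      simp only [sub_im, intCast_im, sub_zero, zero_im] at this
      nlinarith
    have hle := hmin _ hmem (mul_ne_zero hzk hu0)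
    rw [norm_mul, hu] at hle
    have h1 : 1 ≤ ‖z - k‖ := le_of_mul_le_mul_right (by simpa using hle) c₀_pos
    have h2 : 1 ≤ ‖z - k‖ ^ 2 := by nlinarith
    rw [Complex.sq_norm, normSq_apply] at h2
    simp only [sub_re, sub_im, intCast_re, intCast_im, sub_zero] at h2
    nlinarith
  obtain ⟨k, hk⟩ := exists_int_eq_add_half hre
  refine ⟨z - k, ?_, ?_⟩
  · rcases (abs_eq (by positivity)).1 him with h | h
    · left; apply Complex.ext <;> simp [ω, hk, h]
    · right; apply Complex.ext <;> simp [ω, hk, h]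
  · rw [sub_mul, sub_eq_add_neg, ← neg_mul, ← Int.cast_neg, latticeOf_add_intCast_mul]

lemma IsMinimalVector.gcd_eq_one {a b : ℂ} {m n : ℤ}
    (hu : IsMinimalVector (latticeOf a b) (m * a + n * b)) : Int.gcd m n = 1 := by
  obtain ⟨-, hu0, hnorm⟩ := hu
  have hm := Int.gcd_dvd_left m n
  have hn := Int.gcd_dvd_right m n
  generalize Int.gcd m n = g at hm hn ⊢
  obtain ⟨m', rfl⟩ := hm
  obtain ⟨n', rfl⟩ := hn
  have hfactor : (↑(g * m') * a + ↑(g * n') * b : ℂ) = g * (m' * a + n' * b) := by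
    push_cast; ring
  have hu₀ : (m' * a + n' * b : ℂ) ≠ 0 := fun h => hu0 (by rw [hfactor, h, mul_zero])
  have hle := systole_le_norm (mem_latticeOf.2 ⟨m', n', rfl⟩) hu₀
  rw [← hnorm, hfactor, norm_mul, Complex.norm_natCast] at hle
  have hg : (g : ℝ) ≤ 1 := le_of_mul_le_mul_right (by linarith) (norm_pos_iff.2 hu₀)
  have hg0 : g ≠ 0 := fun h => hu0 (by rw [hfactor, h, Nat.cast_zero, zero_mul])
  have : g ≤ 1 := by exact_mod_cast hg
  omega

lemma IsMinimalVector.exists_latticeOf_eq {a b u : ℂ} (hu : IsMinimalVector (latticeOf a b) u) :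
    ∃ v, latticeOf u v = latticeOf a b ∧ covol u v = covol a b := by
  obtain ⟨m, n, rfl⟩ := mem_latticeOf.1 hu.1
  have hbezout := Int.gcd_eq_gcd_ab m n
  rw [hu.gcd_eq_one, Nat.cast_one] at hbezout
  have hdet : m * Int.gcdA m n - n * (-Int.gcdB m n) = 1 := by linear_combination -hbezout
  refine ⟨(-Int.gcdB m n : ℤ) * a + (Int.gcdA m n : ℤ) * b, latticeOf_lincomb_eq hdet, ?_⟩
  have hdetR : ((m : ℝ) * Int.gcdA m n - n * (-Int.gcdB m n : ℤ)) = 1 := by exact_mod_cast hdet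
  rw [covol_lincomb, hdetR, abs_one, one_mul]

lemma isHexagonal_of_isMinimalVector {a b u : ℂ} (hcov : covol a b = 1)
    (hsys : systole (latticeOf a b) = c₀) (hu : IsMinimalVector (latticeOf a b) u) :
    IsHexagonal (latticeOf a b) := by
  obtain ⟨v, hL, hcov'⟩ := hu.exists_latticeOf_eq
  have hv : v = v / u * u := (div_mul_cancel₀ v hu.2.1).symm
  rw [hv] at hL hcov'
  have hmin : ∀ x ∈ latticeOf u (v / u * u), x ≠ 0 → c₀ ≤ ‖x‖ := by
    rw [hL, ← hsys]
    exact fun x hx hx0 => systole_le_norm hx hx0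
  obtain ⟨w, hw, hLw⟩ := exists_latticeOf_mul_eq_hex (hu.2.2.trans hsys) (hcov'.trans hcov) hmin
  rw [← hL, hLw]
  exact isHexagonal_latticeOf_mul (hu.2.2.trans hsys) hw

lemma IsMinimalVector4.isMinimalVector_fst {L₁ L₂ : AddSubgroup ℂ} {v : ℂ × ℂ}
    (hsyst : systole L₁ = systole L₂) (h₂ : ∃ w, IsMinimalVector L₂ w)
    (hv : IsMinimalVector4 (L₁.prod L₂) v) (h1 : v.1 ≠ 0) : IsMinimalVector L₁ v.1 := by
  obtain ⟨w, hw, hw0, hwnorm⟩ := h₂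
  obtain ⟨hvmem, -, hvnorm⟩ := hv
  have hv1 := (AddSubgroup.mem_prod.1 hvmem).1
  refine ⟨hv1, h1, le_antisymm ?_ (systole_le_norm hv1 h1)⟩
  calc ‖v.1‖ ≤ norm4 v := norm_fst_le_norm4
    _ = systole4 (L₁.prod L₂) := hvnorm
    _ ≤ norm4 (0, w) :=
      systole4_le_norm4 (AddSubgroup.mem_prod.2 ⟨zero_mem _, hw⟩) (by simp [hw0])
    _ = systole L₁ := by simp [norm4, hsyst, ← hwnorm]

lemma exists_fst_ne_zero_of_linearIndependent {ι : Type*} [Fintype ι] (hι : 2 < Fintype.card ι)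
    {v : ι → ℂ × ℂ} (hv : LinearIndependent ℝ v) : ∃ i, (v i).1 ≠ 0 := by
  by_contra! h
  have hv₂ : v = LinearMap.inr ℝ ℂ ℂ ∘ fun i => (v i).2 := funext fun i => Prod.ext (h i) rfl
  have hcard := (LinearIndependent.of_comp _ (hv₂ ▸ hv)).fintype_card_le_finrank
  rw [finrank_real_complex] at hcard
  omega

theorem hexagonal_of_three_independent_minimal_vectors_general (a b c d : ℂ)
    (hcov₁ : covol a b = 1)
    (hsyst : systole (latticeOf a b) = systole (latticeOf c d))
    (hhex₂ : IsHexagonal (latticeOf c d))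
    (hind : ∃ v₁ v₂ v₃ : ℂ × ℂ,
        IsMinimalVector4 ((latticeOf a b).prod (latticeOf c d)) v₁ ∧
        IsMinimalVector4 ((latticeOf a b).prod (latticeOf c d)) v₂ ∧
        IsMinimalVector4 ((latticeOf a b).prod (latticeOf c d)) v₃ ∧
        LinearIndependent ℝ ![v₁, v₂, v₃]) :
    IsHexagonal (latticeOf a b) := by
  obtain ⟨v₁, v₂, v₃, h₁, h₂, h₃, hli⟩ := hind
  obtain ⟨i, hi⟩ := exists_fst_ne_zero_of_linearIndependent (by simp) hli
  have hmin : IsMinimalVector4 ((latticeOf a b).prod (latticeOf c d)) (![v₁, v₂, v₃] i) := by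
    fin_cases i <;> assumption
  exact isHexagonal_of_isMinimalVector hcov₁ (hsyst.trans hhex₂.systole_eq)
    (hmin.isMinimalVector_fst hsyst hhex₂.exists_isMinimalVector hi)

/-- If Λ₁ and Λ₂ are covolume-1 lattices in ℝ² with equal systoles, Λ₂ is
hexagonal, and the orthogonal product Λ₁ × Λ₂ ⊂ ℝ⁴ has at least three
linearly independent minimal vectors, then Λ₁ is hexagonal as well. -/
theorem hexagonal_of_three_independent_minimal_vectors (a b c d : ℂ)
    (hcov₁ : covol a b = 1) (hcov₂ : covol c d = 1)
    (hsyst : systole (latticeOf a b) = systole (latticeOf c d))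
    (hhex₂ : IsHexagonal (latticeOf c d))
    (hind : ∃ v₁ v₂ v₃ : ℂ × ℂ,
        IsMinimalVector4 ((latticeOf a b).prod (latticeOf c d)) v₁ ∧
        IsMinimalVector4 ((latticeOf a b).prod (latticeOf c d)) v₂ ∧
        IsMinimalVector4 ((latticeOf a b).prod (latticeOf c d)) v₃ ∧
        LinearIndependent ℝ ![v₁, v₂, v₃]) :
    IsHexagonal (latticeOf a b) :=
  hexagonal_of_three_independent_minimal_vectors_general a b c d hcov₁ hsyst hhex₂ hind
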